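/- arXiv:1610.05145 — 3 statements merged into one kernel-verified Lean document; each statement's English description precedes it below -/
import Mathlib

section
/- Let C be a globularily generated double category. Then the morphism category C1 of C equals the colimit (increasing union) of its vertical filtration: C1 = colim_k V_k^C; equivalently, every 2-morphism of C lies in V_k^C for some positive integer k. -/
universe u

/-! Basic raw categories and functors. -/


structure CatData : Type (u + 1) where
  Obj : Type u
  Hom : Obj → Obj → Type u
  id : (a : Obj) → Hom a a
  comp : {a b c : Obj} → Hom a b → Hom b c → Hom a c
  id_comp : ∀ {a b : Obj} (f : Hom a b), comp (id a) f = f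
  comp_id : ∀ {a b : Obj} (f : Hom a b), comp f (id b) = f
  assoc : ∀ {a b c d : Obj} (f : Hom a b) (g : Hom b c) (h : Hom c d),
    comp (comp f g) h = comp f (comp g h)

namespace CatData

/-- The canonical morphism associated to an equality of objects. -/
def eqHom (C : CatData.{u}) {a b : C.Obj} (h : a = b) : C.Hom a b := h ▸ C.id a

/-- Conjugation of a morphism by equalities of objects. -/
def conj (C : CatData.{u}) {a a' b b' : C.Obj} (h1 : a' = a) (h2 : b = b')
    (f : C.Hom a b) : C.Hom a' b' :=
  C.comp (C.eqHom h1) (C.comp f (C.eqHom h2))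

@[simp] theorem eqHom_refl (C : CatData.{u}) (a : C.Obj) : C.eqHom (rfl : a = a) = C.id a := rfl

@[simp] theorem eqHom_trans (C : CatData.{u}) {a b c : C.Obj} (h : a = b) (h' : b = c) :
    C.comp (C.eqHom h) (C.eqHom h') = C.eqHom (h.trans h') := by
  subst h; subst h'; exact C.id_comp _

@[simp] theorem conj_rfl (C : CatData.{u}) {a b : C.Obj} (f : C.Hom a b) :
    C.conj rfl rfl f = f := by
  show C.comp (C.id a) (C.comp f (C.id b)) = f
  rw [C.comp_id, C.id_comp]

theorem eqHom_conj (C : CatData.{u}) {a a' b b' : C.Obj} (h1 : a' = a) (h2 : b = b')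
    (h : a = b) : C.conj h1 h2 (C.eqHom h) = C.eqHom ((h1.trans h).trans h2) := by
  subst h1; subst h2; subst h
  exact C.conj_rfl _

end CatData

structure Fctr (C D : CatData.{u}) where
  obj : C.Obj → D.Obj
  map : {a b : C.Obj} → C.Hom a b → D.Hom (obj a) (obj b)
  map_id : ∀ a : C.Obj, map (C.id a) = D.id (obj a)
  map_comp : ∀ {a b c : C.Obj} (f : C.Hom a b) (g : C.Hom b c),
    map (C.comp f g) = D.comp (map f) (map g)

namespace Fctr

def idF (C : CatData.{u}) : Fctr C C where
  obj := fun a => a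
  map := fun f => f
  map_id := fun _ => rfl
  map_comp := fun _ _ => rfl

def compF {C D E : CatData.{u}} (F : Fctr C D) (G : Fctr D E) : Fctr C E where
  obj := fun a => G.obj (F.obj a)
  map := fun f => G.map (F.map f)
  map_id := fun a => by
    show G.map (F.map (C.id a)) = E.id (G.obj (F.obj a))
    rw [F.map_id, G.map_id]
  map_comp := fun f g => by
    show G.map (F.map (C.comp f g)) = E.comp (G.map (F.map f)) (G.map (F.map g))
    rw [F.map_comp, G.map_comp]

theorem map_eqHom {C D : CatData.{u}} (F : Fctr C D) {a b : C.Obj} (h : a = b) :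
    F.map (C.eqHom h) = D.eqHom (congrArg F.obj h) := by
  subst h; simpa using F.map_id a

end Fctr

/-! Pseudo double categories.

A (pseudo) double category is given by a category `C0` of objects and vertical
morphisms, a category `C1` of horizontal morphisms and 2-morphisms, source, target
and horizontal identity functors, a horizontal composition (given on objects of `C1`
for composable pairs, and on morphisms of `C1` for compatible pairs of 2-morphisms),
together with globular left/right identity and associativity isomorphisms. -/

structure DblCat : Type (u + 1) where
  C0 : CatData.{u}
  C1 : CatData.{u}
  s : Fctr C1 C0
  t : Fctr C1 C0
  i : Fctr C0 C1
  i_s_obj : ∀ a : C0.Obj, s.obj (i.obj a) = a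
  i_t_obj : ∀ a : C0.Obj, t.obj (i.obj a) = a
  i_s_map : ∀ {a b : C0.Obj} (u : C0.Hom a b),
    s.map (i.map u) = C0.conj (i_s_obj a) (i_s_obj b).symm u
  i_t_map : ∀ {a b : C0.Obj} (u : C0.Hom a b),
    t.map (i.map u) = C0.conj (i_t_obj a) (i_t_obj b).symm u
  hObj : (f g : C1.Obj) → t.obj f = s.obj g → C1.Obj
  hObj_s : ∀ (f g : C1.Obj) (w : t.obj f = s.obj g), s.obj (hObj f g w) = s.obj f
  hObj_t : ∀ (f g : C1.Obj) (w : t.obj f = s.obj g), t.obj (hObj f g w) = t.obj g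
  hMap : {f f' g g' : C1.Obj} → (w : t.obj f = s.obj g) → (w' : t.obj f' = s.obj g') →
    (Φ : C1.Hom f f') → (Ψ : C1.Hom g g') →
    C0.comp (t.map Φ) (C0.eqHom w') = C0.comp (C0.eqHom w) (s.map Ψ) →
    C1.Hom (hObj f g w) (hObj f' g' w')
  hMap_id : ∀ {f g : C1.Obj} (w : t.obj f = s.obj g) (pf : _),
    hMap w w (C1.id f) (C1.id g) pf = C1.id (hObj f g w)
  hMap_comp : ∀ {f f' f'' g g' g'' : C1.Obj}
    (w : t.obj f = s.obj g) (w' : t.obj f' = s.obj g') (w'' : t.obj f'' = s.obj g'')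
    (Φ : C1.Hom f f') (Φ' : C1.Hom f' f'') (Ψ : C1.Hom g g') (Ψ' : C1.Hom g' g'')
    (pf : _) (pf' : _) (pf'' : _),
    hMap w w'' (C1.comp Φ Φ') (C1.comp Ψ Ψ') pf'' =
      C1.comp (hMap w w' Φ Ψ pf) (hMap w' w'' Φ' Ψ' pf')
  hMap_s : ∀ {f f' g g' : C1.Obj} (w : t.obj f = s.obj g) (w' : t.obj f' = s.obj g')
    (Φ : C1.Hom f f') (Ψ : C1.Hom g g') (pf : _),
    s.map (hMap w w' Φ Ψ pf) = C0.conj (hObj_s f g w) (hObj_s f' g' w').symm (s.map Φ)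
  hMap_t : ∀ {f f' g g' : C1.Obj} (w : t.obj f = s.obj g) (w' : t.obj f' = s.obj g')
    (Φ : C1.Hom f f') (Ψ : C1.Hom g g') (pf : _),
    t.map (hMap w w' Φ Ψ pf) = C0.conj (hObj_t f g w) (hObj_t f' g' w').symm (t.map Ψ)
  lunit : (f : C1.Obj) → C1.Hom (hObj (i.obj (s.obj f)) f (i_t_obj (s.obj f))) f
  lunitInv : (f : C1.Obj) → C1.Hom f (hObj (i.obj (s.obj f)) f (i_t_obj (s.obj f)))
  lunit_iso₁ : ∀ f : C1.Obj, C1.comp (lunit f) (lunitInv f) = C1.id _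
  lunit_iso₂ : ∀ f : C1.Obj, C1.comp (lunitInv f) (lunit f) = C1.id _
  lunit_s : ∀ f : C1.Obj, ∃ h, s.map (lunit f) = C0.eqHom h
  lunit_t : ∀ f : C1.Obj, ∃ h, t.map (lunit f) = C0.eqHom h
  lunitInv_s : ∀ f : C1.Obj, ∃ h, s.map (lunitInv f) = C0.eqHom h
  lunitInv_t : ∀ f : C1.Obj, ∃ h, t.map (lunitInv f) = C0.eqHom h
  runit : (f : C1.Obj) → C1.Hom (hObj f (i.obj (t.obj f)) (i_s_obj (t.obj f)).symm) f
  runitInv : (f : C1.Obj) → C1.Hom f (hObj f (i.obj (t.obj f)) (i_s_obj (t.obj f)).symm)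
  runit_iso₁ : ∀ f : C1.Obj, C1.comp (runit f) (runitInv f) = C1.id _
  runit_iso₂ : ∀ f : C1.Obj, C1.comp (runitInv f) (runit f) = C1.id _
  runit_s : ∀ f : C1.Obj, ∃ h, s.map (runit f) = C0.eqHom h
  runit_t : ∀ f : C1.Obj, ∃ h, t.map (runit f) = C0.eqHom h
  runitInv_s : ∀ f : C1.Obj, ∃ h, s.map (runitInv f) = C0.eqHom h
  runitInv_t : ∀ f : C1.Obj, ∃ h, t.map (runitInv f) = C0.eqHom h
  assocC : {f g h : C1.Obj} → (w1 : t.obj f = s.obj g) → (w2 : t.obj g = s.obj h) →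
    C1.Hom (hObj (hObj f g w1) h ((hObj_t f g w1).trans w2))
      (hObj f (hObj g h w2) (w1.trans (hObj_s g h w2).symm))
  assocCInv : {f g h : C1.Obj} → (w1 : t.obj f = s.obj g) → (w2 : t.obj g = s.obj h) →
    C1.Hom (hObj f (hObj g h w2) (w1.trans (hObj_s g h w2).symm))
      (hObj (hObj f g w1) h ((hObj_t f g w1).trans w2))
  assoc_iso₁ : ∀ {f g h : C1.Obj} (w1 : t.obj f = s.obj g) (w2 : t.obj g = s.obj h),
    C1.comp (assocC w1 w2) (assocCInv w1 w2) = C1.id _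
  assoc_iso₂ : ∀ {f g h : C1.Obj} (w1 : t.obj f = s.obj g) (w2 : t.obj g = s.obj h),
    C1.comp (assocCInv w1 w2) (assocC w1 w2) = C1.id _
  assoc_s : ∀ {f g h : C1.Obj} (w1 : t.obj f = s.obj g) (w2 : t.obj g = s.obj h),
    ∃ hh, s.map (assocC w1 w2) = C0.eqHom hh
  assoc_t : ∀ {f g h : C1.Obj} (w1 : t.obj f = s.obj g) (w2 : t.obj g = s.obj h),
    ∃ hh, t.map (assocC w1 w2) = C0.eqHom hh
  assocInv_s : ∀ {f g h : C1.Obj} (w1 : t.obj f = s.obj g) (w2 : t.obj g = s.obj h),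
    ∃ hh, s.map (assocCInv w1 w2) = C0.eqHom hh
  assocInv_t : ∀ {f g h : C1.Obj} (w1 : t.obj f = s.obj g) (w2 : t.obj g = s.obj h),
    ∃ hh, t.map (assocCInv w1 w2) = C0.eqHom hh

namespace DblCat

/-- A 2-morphism is globular if its source and target are vertical identities. -/
def Globular (D : DblCat.{u}) {f g : D.C1.Obj} (Φ : D.C1.Hom f g) : Prop :=
  (∃ h, D.s.map Φ = D.C0.eqHom h) ∧ (∃ h, D.t.map Φ = D.C0.eqHom h)

/-- A 2-morphism is the horizontal identity of some vertical morphism. -/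
def IsHId (D : DblCat.{u}) {f g : D.C1.Obj} (Φ : D.C1.Hom f g) : Prop :=
  ∃ (a b : D.C0.Obj) (u : D.C0.Hom a b),
    f = D.i.obj a ∧ g = D.i.obj b ∧ HEq Φ (D.i.map u)

end DblCat

/-! Sub-double categories, globular generation, and the vertical/horizontal filtrations. -/

structure SubCat (C : CatData.{u}) where
  objs : Set C.Obj
  homs : ∀ ⦃a b : C.Obj⦄, C.Hom a b → Prop
  src_mem : ∀ {a b : C.Obj} {f : C.Hom a b}, homs f → a ∈ objs
  tgt_mem : ∀ {a b : C.Obj} {f : C.Hom a b}, homs f → b ∈ objs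
  id_mem : ∀ {a : C.Obj}, a ∈ objs → homs (C.id a)
  comp_mem : ∀ {a b c : C.Obj} {f : C.Hom a b} {g : C.Hom b c},
    homs f → homs g → homs (C.comp f g)

structure SubDbl (D : DblCat.{u}) where
  S0 : SubCat D.C0
  S1 : SubCat D.C1
  s_obj_mem : ∀ {f : D.C1.Obj}, f ∈ S1.objs → D.s.obj f ∈ S0.objs
  t_obj_mem : ∀ {f : D.C1.Obj}, f ∈ S1.objs → D.t.obj f ∈ S0.objs
  s_map_mem : ∀ {f g : D.C1.Obj} {Φ : D.C1.Hom f g}, S1.homs Φ → S0.homs (D.s.map Φ)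
  t_map_mem : ∀ {f g : D.C1.Obj} {Φ : D.C1.Hom f g}, S1.homs Φ → S0.homs (D.t.map Φ)
  i_obj_mem : ∀ {a : D.C0.Obj}, a ∈ S0.objs → D.i.obj a ∈ S1.objs
  i_map_mem : ∀ {a b : D.C0.Obj} {u : D.C0.Hom a b}, S0.homs u → S1.homs (D.i.map u)
  hObj_mem : ∀ {f g : D.C1.Obj} (w : D.t.obj f = D.s.obj g),
    f ∈ S1.objs → g ∈ S1.objs → D.hObj f g w ∈ S1.objs
  hMap_mem : ∀ {f f' g g' : D.C1.Obj} (w : D.t.obj f = D.s.obj g)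
    (w' : D.t.obj f' = D.s.obj g') (Φ : D.C1.Hom f f') (Ψ : D.C1.Hom g g') (pf : _),
    S1.homs Φ → S1.homs Ψ → S1.homs (D.hMap w w' Φ Ψ pf)
  lunit_mem : ∀ {f : D.C1.Obj}, f ∈ S1.objs → S1.homs (D.lunit f) ∧ S1.homs (D.lunitInv f)
  runit_mem : ∀ {f : D.C1.Obj}, f ∈ S1.objs → S1.homs (D.runit f) ∧ S1.homs (D.runitInv f)
  assoc_mem : ∀ {f g h : D.C1.Obj} (w1 : D.t.obj f = D.s.obj g) (w2 : D.t.obj g = D.s.obj h),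
    f ∈ S1.objs → g ∈ S1.objs → h ∈ S1.objs →
    S1.homs (D.assocC w1 w2) ∧ S1.homs (D.assocCInv w1 w2)

/-- A double category is globularily generated if the only sub-double category of it
containing all of its globular 2-morphisms is the double category itself. -/
def DblCat.GloballyGenerated (D : DblCat.{u}) : Prop :=
  ∀ S : SubDbl D,
    (∀ {f g : D.C1.Obj} (Φ : D.C1.Hom f g), D.Globular Φ → S.S1.homs Φ) →
    ((∀ a : D.C0.Obj, a ∈ S.S0.objs) ∧ (∀ {a b : D.C0.Obj} (u : D.C0.Hom a b), S.S0.homs u) ∧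
      (∀ f : D.C1.Obj, f ∈ S.S1.objs) ∧ (∀ {f g : D.C1.Obj} (Φ : D.C1.Hom f g), S.S1.homs Φ))

/-- The subcategory (closure) generated by a collection of morphisms. -/
inductive catClos (C : CatData.{u}) (S : ∀ ⦃a b : C.Obj⦄, C.Hom a b → Prop) :
    ∀ ⦃a b : C.Obj⦄, C.Hom a b → Prop
  | base {a b : C.Obj} {f : C.Hom a b} : S f → catClos C S f
  | id (a : C.Obj) : catClos C S (C.id a)
  | comp {a b c : C.Obj} {f : C.Hom a b} {g : C.Hom b c} :
      catClos C S f → catClos C S g → catClos C S (C.comp f g)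

/-- Closure of a collection of 2-morphisms under horizontal composition. -/
inductive horClos (D : DblCat.{u}) (S : ∀ ⦃f g : D.C1.Obj⦄, D.C1.Hom f g → Prop) :
    ∀ ⦃f g : D.C1.Obj⦄, D.C1.Hom f g → Prop
  | base {f g : D.C1.Obj} {Φ : D.C1.Hom f g} : S Φ → horClos D S Φ
  | hcomp {f f' g g' : D.C1.Obj} (w : D.t.obj f = D.s.obj g) (w' : D.t.obj f' = D.s.obj g')
      (Φ : D.C1.Hom f f') (Ψ : D.C1.Hom g g') (pf : _) :
      horClos D S Φ → horClos D S Ψ → horClos D S (D.hMap w w' Φ Ψ pf)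

/-- The horizontal filtration of a double category: `Hfil D k` is the collection
`H_{k+1}` of the paper; `Hfil D 0 = H₁` is the union of the globular 2-morphisms and
the horizontal identities of vertical morphisms, and `H_{k+1}` consists of the
horizontal composites of 2-morphisms of `V_k`. -/
def DblCat.Hfil (D : DblCat.{u}) : ℕ → ∀ ⦃f g : D.C1.Obj⦄, D.C1.Hom f g → Prop
  | 0 => fun _ _ Φ => D.Globular Φ ∨ D.IsHId Φ
  | k + 1 => horClos D (catClos D.C1 (D.Hfil k))

/-- The vertical filtration of a double category: `Vfil D k` is the collection of
morphisms of the subcategory `V_{k+1}` of `C1` generated by `H_{k+1}`. -/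
def DblCat.Vfil (D : DblCat.{u}) (k : ℕ) : ∀ ⦃f g : D.C1.Obj⦄, D.C1.Hom f g → Prop :=
  catClos D.C1 (D.Hfil k)

/-- Strictness of a double category: horizontal composition is strictly unital and
associative and the unitors and associator are identities. -/
structure DblCat.IsStrict (D : DblCat.{u}) : Prop where
  hObj_idl : ∀ f : D.C1.Obj, D.hObj (D.i.obj (D.s.obj f)) f (D.i_t_obj (D.s.obj f)) = f
  hObj_idr : ∀ f : D.C1.Obj, D.hObj f (D.i.obj (D.t.obj f)) (D.i_s_obj (D.t.obj f)).symm = f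
  hObj_assoc : ∀ {f g h : D.C1.Obj} (w1 : D.t.obj f = D.s.obj g) (w2 : D.t.obj g = D.s.obj h),
    D.hObj (D.hObj f g w1) h ((D.hObj_t f g w1).trans w2) =
      D.hObj f (D.hObj g h w2) (w1.trans ((D.hObj_s g h w2)).symm)
  lunit_eq : ∀ f : D.C1.Obj, D.lunit f = D.C1.eqHom (hObj_idl f)
  runit_eq : ∀ f : D.C1.Obj, D.runit f = D.C1.eqHom (hObj_idr f)
  assoc_eq : ∀ {f g h : D.C1.Obj} (w1 : D.t.obj f = D.s.obj g) (w2 : D.t.obj g = D.s.obj h),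
    D.assocC w1 w2 = D.C1.eqHom (hObj_assoc w1 w2)

/-! Double functors. -/

structure DblFctr (C D : DblCat.{u}) where
  F0 : Fctr C.C0 D.C0
  F1 : Fctr C.C1 D.C1
  s_obj : ∀ f : C.C1.Obj, D.s.obj (F1.obj f) = F0.obj (C.s.obj f)
  t_obj : ∀ f : C.C1.Obj, D.t.obj (F1.obj f) = F0.obj (C.t.obj f)
  s_map : ∀ {f g : C.C1.Obj} (Φ : C.C1.Hom f g),
    D.s.map (F1.map Φ) = D.C0.conj (s_obj f) (s_obj g).symm (F0.map (C.s.map Φ))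
  t_map : ∀ {f g : C.C1.Obj} (Φ : C.C1.Hom f g),
    D.t.map (F1.map Φ) = D.C0.conj (t_obj f) (t_obj g).symm (F0.map (C.t.map Φ))
  i_obj : ∀ a : C.C0.Obj, F1.obj (C.i.obj a) = D.i.obj (F0.obj a)
  i_map : ∀ {a b : C.C0.Obj} (u : C.C0.Hom a b),
    F1.map (C.i.map u) = D.C1.conj (i_obj a) (i_obj b).symm (D.i.map (F0.map u))
  hObj_comm : ∀ (f g : C.C1.Obj) (w : C.t.obj f = C.s.obj g),
    F1.obj (C.hObj f g w) =
      D.hObj (F1.obj f) (F1.obj g)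
        ((t_obj f).trans ((congrArg F0.obj w).trans (s_obj g).symm))
  hMap_comm : ∀ {f f' g g' : C.C1.Obj} (w : C.t.obj f = C.s.obj g)
    (w' : C.t.obj f' = C.s.obj g') (Φ : C.C1.Hom f f') (Ψ : C.C1.Hom g g')
    (pf : _) (pf' : _),
    F1.map (C.hMap w w' Φ Ψ pf) =
      D.C1.conj (hObj_comm f g w) (hObj_comm f' g' w').symm
        (D.hMap _ _ (F1.map Φ) (F1.map Ψ) pf')
  lunit_comm : ∀ f : C.C1.Obj, HEq (F1.map (C.lunit f)) (D.lunit (F1.obj f))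
  runit_comm : ∀ f : C.C1.Obj, HEq (F1.map (C.runit f)) (D.runit (F1.obj f))
  assoc_comm : ∀ {f g h : C.C1.Obj} (w1 : C.t.obj f = C.s.obj g)
    (w2 : C.t.obj g = C.s.obj h),
    HEq (F1.map (C.assocC w1 w2))
      (D.assocC ((t_obj f).trans ((congrArg F0.obj w1).trans (s_obj g).symm))
        ((t_obj g).trans ((congrArg F0.obj w2).trans (s_obj h).symm)))

/-! The 2-morphisms lying in some `V_k`, together with all objects and vertical morphisms,
form a sub-double category: the filtration is increasing, each `V_k` is closed under vertical
composition, horizontal composites of 2-morphisms of `V_k` lie in `H_{k+1} ⊆ V_{k+1}`, and the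
unitors, associators and horizontal identities are already in `V_1`. It contains every
globular 2-morphism, so by globular generation it is everything. -/

def SubCat.wide (C : CatData.{u}) (P : ∀ ⦃a b : C.Obj⦄, C.Hom a b → Prop)
    (id_mem : ∀ a : C.Obj, P (C.id a))
    (comp_mem : ∀ {a b c : C.Obj} {f : C.Hom a b} {g : C.Hom b c}, P f → P g → P (C.comp f g)) :
    SubCat C where
  objs := Set.univ
  homs := P
  src_mem _ := Set.mem_univ _
  tgt_mem _ := Set.mem_univ _
  id_mem _ := id_mem _
  comp_mem := comp_mem

theorem catClos.mono {C : CatData.{u}} {S T : ∀ ⦃a b : C.Obj⦄, C.Hom a b → Prop}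
    (hST : ∀ ⦃a b : C.Obj⦄ (f : C.Hom a b), S f → T f) {a b : C.Obj} {f : C.Hom a b}
    (hf : catClos C S f) : catClos C T f := by
  induction hf with
  | base hS => exact catClos.base (hST _ hS)
  | id a => exact catClos.id a
  | comp _ _ ihf ihg => exact catClos.comp ihf ihg

namespace DblCat

variable (D : DblCat.{u})

theorem Hfil_le_succ (k : ℕ) {f g : D.C1.Obj} {Φ : D.C1.Hom f g} (h : D.Hfil k Φ) :
    D.Hfil (k + 1) Φ :=
  horClos.base (catClos.base h)

theorem Hfil_mono {k k' : ℕ} (hk : k ≤ k') {f g : D.C1.Obj} {Φ : D.C1.Hom f g}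
    (h : D.Hfil k Φ) : D.Hfil k' Φ := by
  induction hk with
  | refl => exact h
  | step _ ih => exact D.Hfil_le_succ _ ih

theorem Vfil_mono {k k' : ℕ} (hk : k ≤ k') {f g : D.C1.Obj} {Φ : D.C1.Hom f g}
    (h : D.Vfil k Φ) : D.Vfil k' Φ :=
  catClos.mono (fun _ _ _ => D.Hfil_mono hk) h

theorem Vfil_succ_hMap (k : ℕ) {f f' g g' : D.C1.Obj} (w : D.t.obj f = D.s.obj g)
    (w' : D.t.obj f' = D.s.obj g') {Φ : D.C1.Hom f f'} {Ψ : D.C1.Hom g g'} (pf : _)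
    (hΦ : D.Vfil k Φ) (hΨ : D.Vfil k Ψ) : D.Vfil (k + 1) (D.hMap w w' Φ Ψ pf) :=
  catClos.base (horClos.hcomp w w' Φ Ψ pf (horClos.base hΦ) (horClos.base hΨ))

def VfilUnion ⦃f g : D.C1.Obj⦄ (Φ : D.C1.Hom f g) : Prop :=
  ∃ k : ℕ, D.Vfil k Φ

variable {D}

theorem VfilUnion.comp {f g h : D.C1.Obj} {Φ : D.C1.Hom f g} {Ψ : D.C1.Hom g h}
    (hΦ : D.VfilUnion Φ) (hΨ : D.VfilUnion Ψ) : D.VfilUnion (D.C1.comp Φ Ψ) := by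
  obtain ⟨k, hk⟩ := hΦ
  obtain ⟨k', hk'⟩ := hΨ
  exact ⟨max k k', catClos.comp (D.Vfil_mono (le_max_left k k') hk)
    (D.Vfil_mono (le_max_right k k') hk')⟩

theorem VfilUnion.hMap {f f' g g' : D.C1.Obj} (w : D.t.obj f = D.s.obj g)
    (w' : D.t.obj f' = D.s.obj g') {Φ : D.C1.Hom f f'} {Ψ : D.C1.Hom g g'} (pf : _)
    (hΦ : D.VfilUnion Φ) (hΨ : D.VfilUnion Ψ) : D.VfilUnion (D.hMap w w' Φ Ψ pf) := by
  obtain ⟨k, hk⟩ := hΦ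
  obtain ⟨k', hk'⟩ := hΨ
  exact ⟨max k k' + 1, D.Vfil_succ_hMap _ w w' pf (D.Vfil_mono (le_max_left k k') hk)
    (D.Vfil_mono (le_max_right k k') hk')⟩

theorem VfilUnion.of_globular {f g : D.C1.Obj} {Φ : D.C1.Hom f g} (h : D.Globular Φ) :
    D.VfilUnion Φ :=
  ⟨0, catClos.base (Or.inl h)⟩

theorem VfilUnion.i_map {a b : D.C0.Obj} (u : D.C0.Hom a b) : D.VfilUnion (D.i.map u) :=
  ⟨0, catClos.base (Or.inr ⟨a, b, u, rfl, rfl, HEq.rfl⟩)⟩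

variable (D)

def vfilUnionSubDbl : SubDbl D where
  S0 := SubCat.wide D.C0 (fun _ _ _ => True) (fun _ => trivial) (fun _ _ => trivial)
  S1 := SubCat.wide D.C1 D.VfilUnion (fun _ => ⟨0, catClos.id _⟩) VfilUnion.comp
  s_obj_mem _ := Set.mem_univ _
  t_obj_mem _ := Set.mem_univ _
  s_map_mem _ := trivial
  t_map_mem _ := trivial
  i_obj_mem _ := Set.mem_univ _
  i_map_mem {_ _ u} _ := .i_map u
  hObj_mem _ _ _ := Set.mem_univ _
  hMap_mem w w' _ _ pf := VfilUnion.hMap w w' pf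
  lunit_mem _ := ⟨.of_globular ⟨D.lunit_s _, D.lunit_t _⟩,
    .of_globular ⟨D.lunitInv_s _, D.lunitInv_t _⟩⟩
  runit_mem _ := ⟨.of_globular ⟨D.runit_s _, D.runit_t _⟩,
    .of_globular ⟨D.runitInv_s _, D.runitInv_t _⟩⟩
  assoc_mem w1 w2 _ _ _ := ⟨.of_globular ⟨D.assoc_s w1 w2, D.assoc_t w1 w2⟩,
    .of_globular ⟨D.assocInv_s w1 w2, D.assocInv_t w1 w2⟩⟩

end DblCat

/-- if `D` is a globularily generated double category then its morphism
category `C1` is the colimit (increasing union) of its vertical filtration: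
every 2-morphism of `D` lies in some term `V_k` of the vertical filtration. -/
theorem stmt0 (D : DblCat.{u}) (hD : D.GloballyGenerated) :
    ∀ {f g : D.C1.Obj} (Φ : D.C1.Hom f g), ∃ k : ℕ, D.Vfil k Φ :=
  (hD D.vfilUnionSubDbl fun _ hΦ => .of_globular hΦ).2.2.2
end

section
/- Let C and C' be globularily generated double categories, let G : C → C' be a double functor, and let k be a positive integer. Then the image of the collection H_k^C under the morphism function of the morphism functor G1 of G is contained in H_k^{C'}, and the image of the k-th vertical category V_k^C under G1 is contained in V_k^{C'}. -/
universe u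

/-! A double functor preserves globularity and horizontal identities because it
commutes with `s`, `t` and `i`, so it maps `H₁` into `H₁`. Since `G₁` is a functor it maps the
subcategory generated by `H_k` into the one generated by the image of `H_k`, and since it commutes
with horizontal composition up to the canonical isomorphisms given by equalities of objects, it
maps horizontal composites of `V_k` into horizontal composites of `V_k`. -/

theorem CatData.conj_heq (C : CatData.{u}) {a a' b b' : C.Obj} (h1 : a' = a) (h2 : b = b')
    (f : C.Hom a b) : HEq (C.conj h1 h2 f) f := by
  subst h1 h2; rw [C.conj_rfl]

theorem CatData.conj_mem (C : CatData.{u}) {P : ∀ ⦃a b : C.Obj⦄, C.Hom a b → Prop}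
    {a a' b b' : C.Obj} (h1 : a' = a) (h2 : b = b') {f : C.Hom a b} (hf : P f) :
    P (C.conj h1 h2 f) := by
  subst h1 h2; rwa [C.conj_rfl]

theorem CatData.conj_comp_eqHom_eq_eqHom_comp_conj (C : CatData.{u})
    {a a' b b' c c' d d' : C.Obj} (e1 : a' = a) (e2 : b' = b) (e3 : c' = c) (e4 : d' = d)
    (p : a = c) (p' : b = d) {X : C.Hom a b} {Y : C.Hom c d}
    (h : C.comp X (C.eqHom p') = C.comp (C.eqHom p) Y) :
    C.comp (C.conj e1 e2.symm X) (C.eqHom (e2.trans (p'.trans e4.symm))) =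
      C.comp (C.eqHom (e1.trans (p.trans e3.symm))) (C.conj e3 e4.symm Y) := by
  subst e1 e2 e3 e4 p p'
  simpa only [eqHom_refl, conj_rfl, C.comp_id, C.id_comp] using h

theorem Fctr.map_comp_eqHom_eq {C D : CatData.{u}} (F : Fctr C D) {a b c d : C.Obj}
    {p : a = c} {p' : b = d} {X : C.Hom a b} {Y : C.Hom c d}
    (h : C.comp X (C.eqHom p') = C.comp (C.eqHom p) Y) :
    D.comp (F.map X) (D.eqHom (congrArg F.obj p')) =
      D.comp (D.eqHom (congrArg F.obj p)) (F.map Y) := by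
  simpa only [F.map_comp, F.map_eqHom] using congrArg F.map h

theorem catClos.map {C D : CatData.{u}} (F : Fctr C D) {S : ∀ ⦃a b : C.Obj⦄, C.Hom a b → Prop}
    {T : ∀ ⦃a b : D.Obj⦄, D.Hom a b → Prop} (hST : ∀ {a b} (f : C.Hom a b), S f → T (F.map f))
    {a b : C.Obj} {f : C.Hom a b} (hf : catClos C S f) : catClos D T (F.map f) := by
  induction hf with
  | base hs => exact .base (hST _ hs)
  | id a => rw [F.map_id]; exact .id _
  | comp _ _ ihf ihg => rw [F.map_comp]; exact .comp ihf ihg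

namespace DblFctr

variable {C C' : DblCat.{u}} (G : DblFctr C C')

theorem globular_map {f g : C.C1.Obj} {Φ : C.C1.Hom f g} (hΦ : C.Globular Φ) :
    C'.Globular (G.F1.map Φ) := by
  obtain ⟨⟨_, hs⟩, ⟨_, ht⟩⟩ := hΦ
  exact ⟨⟨_, by rw [G.s_map, hs, Fctr.map_eqHom, CatData.eqHom_conj]⟩,
    ⟨_, by rw [G.t_map, ht, Fctr.map_eqHom, CatData.eqHom_conj]⟩⟩

theorem isHId_map {f g : C.C1.Obj} {Φ : C.C1.Hom f g} (hΦ : C.IsHId Φ) :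
    C'.IsHId (G.F1.map Φ) := by
  obtain ⟨a, b, u, rfl, rfl, hu⟩ := hΦ
  obtain rfl := eq_of_heq hu
  refine ⟨G.F0.obj a, G.F0.obj b, G.F0.map u, G.i_obj a, G.i_obj b, ?_⟩
  rw [G.i_map]
  exact CatData.conj_heq _ _ _ _

-- The witness exactly as `hObj_comm` and `hMap_comm` state it, so that they rewrite.
abbrev mapWit {f g : C.C1.Obj} (w : C.t.obj f = C.s.obj g) :
    C'.t.obj (G.F1.obj f) = C'.s.obj (G.F1.obj g) :=
  (G.t_obj f).trans ((congrArg G.F0.obj w).trans (G.s_obj g).symm)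

theorem map_hMap_compatible {f f' g g' : C.C1.Obj} {w : C.t.obj f = C.s.obj g}
    {w' : C.t.obj f' = C.s.obj g'} {Φ : C.C1.Hom f f'} {Ψ : C.C1.Hom g g'}
    (pf : C.C0.comp (C.t.map Φ) (C.C0.eqHom w') = C.C0.comp (C.C0.eqHom w) (C.s.map Ψ)) :
    C'.C0.comp (C'.t.map (G.F1.map Φ)) (C'.C0.eqHom (G.mapWit w')) =
      C'.C0.comp (C'.C0.eqHom (G.mapWit w)) (C'.s.map (G.F1.map Ψ)) := by
  rw [G.t_map, G.s_map]
  exact C'.C0.conj_comp_eqHom_eq_eqHom_comp_conj (G.t_obj _) (G.t_obj _) (G.s_obj _)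
    (G.s_obj _) _ _ (G.F0.map_comp_eqHom_eq pf)

theorem horClos_map {S : ∀ ⦃f g : C.C1.Obj⦄, C.C1.Hom f g → Prop}
    {T : ∀ ⦃f g : C'.C1.Obj⦄, C'.C1.Hom f g → Prop}
    (hST : ∀ {f g} (Φ : C.C1.Hom f g), S Φ → T (G.F1.map Φ))
    {f g : C.C1.Obj} {Φ : C.C1.Hom f g} (hΦ : horClos C S Φ) : horClos C' T (G.F1.map Φ) := by
  induction hΦ with
  | base hs => exact .base (hST _ hs)
  | hcomp w w' Φ Ψ pf _ _ ihΦ ihΨ =>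
    rw [G.hMap_comm w w' Φ Ψ pf (G.map_hMap_compatible pf)]
    exact CatData.conj_mem _ _ _ (.hcomp _ _ _ _ _ ihΦ ihΨ)

theorem hfil_map : ∀ (k : ℕ) {f g : C.C1.Obj} (Φ : C.C1.Hom f g),
    C.Hfil k Φ → C'.Hfil k (G.F1.map Φ)
  | 0, _, _, _, hΦ => hΦ.imp G.globular_map G.isHId_map
  | k + 1, _, _, _, hΦ => G.horClos_map (fun _ => catClos.map G.F1 (hfil_map k)) hΦ

end DblFctr

theorem stmt2_general (C C' : DblCat.{u}) (G : DblFctr C C') (k : ℕ) :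
    (∀ {f g : C.C1.Obj} (Φ : C.C1.Hom f g), C.Hfil k Φ → C'.Hfil k (G.F1.map Φ)) ∧
    (∀ {f g : C.C1.Obj} (Φ : C.C1.Hom f g), C.Vfil k Φ → C'.Vfil k (G.F1.map Φ)) :=
  ⟨G.hfil_map k, fun _ => catClos.map G.F1 (G.hfil_map k)⟩

/-- a double functor `G` between globularily generated double categories
maps the `k`-th term `H_k` of the horizontal filtration of its domain into the `k`-th
term of the horizontal filtration of its codomain, and likewise maps the `k`-th
vertical category `V_k` into the `k`-th vertical category of the codomain.
(`Hfil _ k`/`Vfil _ k` denote `H_{k+1}`/`V_{k+1}`, so `k` ranges over all positive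
indices of the paper.) -/
theorem stmt2 (C C' : DblCat.{u}) (hC : C.GloballyGenerated) (hC' : C'.GloballyGenerated)
    (G : DblFctr C C') (k : ℕ) :
    (∀ {f g : C.C1.Obj} (Φ : C.C1.Hom f g), C.Hfil k Φ → C'.Hfil k (G.F1.map Φ)) ∧
    (∀ {f g : C.C1.Obj} (Φ : C.C1.Hom f g), C.Vfil k Φ → C'.Vfil k (G.F1.map Φ)) :=
  stmt2_general C C' G k
end

section
/- Let C and C' be globularily generated double categories and let G, G' : C → C' be double functors. If the decorated horizontalizations H*G and H*G' of G and G' are equal, then for every positive integer k the k-th horizontal functions H_k^G and H_k^{G'} (the restrictions of the morphism functions of G1 and G1' to H_k^C) are equal, and the k-th vertical functors V_k^G and V_k^{G'} (the restrictions of G1 and G1' to V_k^C) are equal. -/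
universe u

/-- Two double functors have equal decorated horizontalizations `H*G = H*G'` iff they
have the same object functor (= same action on the decoration), the same action on
horizontal morphisms, and the same action on globular 2-morphisms. -/
def SameDecH {C C' : DblCat.{u}} (G G' : DblFctr C C') : Prop :=
  G.F0 = G'.F0 ∧ (∀ f : C.C1.Obj, G.F1.obj f = G'.F1.obj f) ∧
    (∀ {f g : C.C1.Obj} (Φ : C.C1.Hom f g), C.Globular Φ → HEq (G.F1.map Φ) (G'.F1.map Φ))


/-! Agreement of `G` and `G'` propagates from generators to generated cells: on horizontal
identities because `G0 = G0'` and double functors preserve `i` strictly, through vertical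
composites because `G1`, `G1'` are functors with the same object function, and through
horizontal composites because double functors commute strictly with `∗`. Induction on `k`
along the filtration then starts from `H₁`, where the hypothesis `H*G = H*G'` applies. -/

namespace CatData

variable (C : CatData.{u})

theorem conj_heq_s3 {a a' b b' : C.Obj} (h1 : a' = a) (h2 : b = b') (f : C.Hom a b) :
    HEq (C.conj h1 h2 f) f := by
  subst h1 h2
  rw [conj_rfl]

theorem comp_heq_comp {a b c a' b' c' : C.Obj} (ha : a = a') (hb : b = b') (hc : c = c')
    {f : C.Hom a b} {f' : C.Hom a' b'} {g : C.Hom b c} {g' : C.Hom b' c'}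
    (hf : HEq f f') (hg : HEq g g') : HEq (C.comp f g) (C.comp f' g') := by
  subst ha hb hc
  cases hf
  cases hg
  rfl

theorem conj_square {a b c d a' b' c' d' : C.Obj}
    (e1 : a = b) (e2 : a' = b') (e3 : d = c) (e4 : d' = c')
    (p : b = c) (p' : b' = c') {X : C.Hom b b'} {Y : C.Hom c c'}
    (hXY : C.comp X (C.eqHom p') = C.comp (C.eqHom p) Y) :
    C.comp (C.conj e1 e2.symm X) (C.eqHom (e2.trans (p'.trans e4.symm))) =
      C.comp (C.eqHom (e1.trans (p.trans e3.symm))) (C.conj e3 e4.symm Y) := by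
  subst e1 e2 e3 e4
  simpa only [conj_rfl] using hXY

end CatData

namespace Fctr

variable {C D : CatData.{u}}

def AgreeOn (F F' : Fctr C D) (S : ∀ ⦃a b : C.Obj⦄, C.Hom a b → Prop) : Prop :=
  ∀ {a b : C.Obj} (f : C.Hom a b), S f → HEq (F.map f) (F'.map f)

theorem agreeOn_catClos {F F' : Fctr C D} (hobj : ∀ a, F.obj a = F'.obj a)
    {S : ∀ ⦃a b : C.Obj⦄, C.Hom a b → Prop} (hS : F.AgreeOn F' S) :
    F.AgreeOn F' (catClos C S) := by
  intro a b f hf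
  induction hf with
  | base hb => exact hS _ hb
  | id a => rw [F.map_id, F'.map_id, hobj a]
  | comp _ _ ihf ihg =>
    rw [F.map_comp, F'.map_comp]
    exact D.comp_heq_comp (hobj _) (hobj _) (hobj _) ihf ihg

end Fctr

theorem DblCat.hMap_heq_hMap (D : DblCat.{u}) {f₁ f₁' g₁ g₁' f₂ f₂' g₂ g₂' : D.C1.Obj}
    (ef : f₁ = f₂) (ef' : f₁' = f₂') (eg : g₁ = g₂) (eg' : g₁' = g₂')
    {w₁ : D.t.obj f₁ = D.s.obj g₁} {w₁' : D.t.obj f₁' = D.s.obj g₁'}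
    {w₂ : D.t.obj f₂ = D.s.obj g₂} {w₂' : D.t.obj f₂' = D.s.obj g₂'}
    {Φ₁ : D.C1.Hom f₁ f₁'} {Ψ₁ : D.C1.Hom g₁ g₁'}
    {Φ₂ : D.C1.Hom f₂ f₂'} {Ψ₂ : D.C1.Hom g₂ g₂'}
    {pf₁ pf₂ : _} (hΦ : HEq Φ₁ Φ₂) (hΨ : HEq Ψ₁ Ψ₂) :
    HEq (D.hMap w₁ w₁' Φ₁ Ψ₁ pf₁) (D.hMap w₂ w₂' Φ₂ Ψ₂ pf₂) := by
  subst ef ef' eg eg'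
  cases hΦ
  cases hΨ
  rfl

namespace DblFctr

variable {C C' : DblCat.{u}}

theorem map_hMap_cond (G : DblFctr C C') {f f' g g' : C.C1.Obj}
    (w : C.t.obj f = C.s.obj g) (w' : C.t.obj f' = C.s.obj g')
    (Φ : C.C1.Hom f f') (Ψ : C.C1.Hom g g')
    (pf : C.C0.comp (C.t.map Φ) (C.C0.eqHom w') = C.C0.comp (C.C0.eqHom w) (C.s.map Ψ)) :
    C'.C0.comp (C'.t.map (G.F1.map Φ))
        (C'.C0.eqHom ((G.t_obj f').trans ((congrArg G.F0.obj w').trans (G.s_obj g').symm))) =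
      C'.C0.comp
        (C'.C0.eqHom ((G.t_obj f).trans ((congrArg G.F0.obj w).trans (G.s_obj g).symm)))
        (C'.s.map (G.F1.map Ψ)) := by
  have hF0 : C'.C0.comp (G.F0.map (C.t.map Φ)) (C'.C0.eqHom (congrArg G.F0.obj w')) =
      C'.C0.comp (C'.C0.eqHom (congrArg G.F0.obj w)) (G.F0.map (C.s.map Ψ)) := by
    rw [← G.F0.map_eqHom w', ← G.F0.map_eqHom w, ← G.F0.map_comp, ← G.F0.map_comp, pf]
  rw [G.t_map, G.s_map]
  exact C'.C0.conj_square (G.t_obj f) (G.t_obj f') (G.s_obj g) (G.s_obj g') _ _ hF0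

variable {G G' : DblFctr C C'}

theorem map_hMap_heq (hobj : ∀ f, G.F1.obj f = G'.F1.obj f) {f f' g g' : C.C1.Obj}
    (w : C.t.obj f = C.s.obj g) (w' : C.t.obj f' = C.s.obj g')
    (Φ : C.C1.Hom f f') (Ψ : C.C1.Hom g g') (pf : _)
    (hΦ : HEq (G.F1.map Φ) (G'.F1.map Φ)) (hΨ : HEq (G.F1.map Ψ) (G'.F1.map Ψ)) :
    HEq (G.F1.map (C.hMap w w' Φ Ψ pf)) (G'.F1.map (C.hMap w w' Φ Ψ pf)) := by
  rw [G.hMap_comm w w' Φ Ψ pf (G.map_hMap_cond w w' Φ Ψ pf),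
    G'.hMap_comm w w' Φ Ψ pf (G'.map_hMap_cond w w' Φ Ψ pf)]
  exact (C'.C1.conj_heq_s3 _ _ _).trans <|
    (C'.hMap_heq_hMap (hobj _) (hobj _) (hobj _) (hobj _) hΦ hΨ).trans
      (C'.C1.conj_heq_s3 _ _ _).symm

theorem agreeOn_horClos (hobj : ∀ f, G.F1.obj f = G'.F1.obj f)
    {S : ∀ ⦃f g : C.C1.Obj⦄, C.C1.Hom f g → Prop} (hS : G.F1.AgreeOn G'.F1 S) :
    G.F1.AgreeOn G'.F1 (horClos C S) := by
  intro f g Φ hΦ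
  induction hΦ with
  | base hb => exact hS _ hb
  | hcomp w w' Φ Ψ pf _ _ ihΦ ihΨ => exact map_hMap_heq hobj w w' Φ Ψ pf ihΦ ihΨ

theorem agreeOn_isHId (h0 : G.F0 = G'.F0) : G.F1.AgreeOn G'.F1 (fun _ _ Φ => C.IsHId Φ) := by
  rintro _ _ Φ ⟨a, b, u, rfl, rfl, hΦ⟩
  obtain rfl := eq_of_heq hΦ
  rw [G.i_map u, G'.i_map u]
  refine (C'.C1.conj_heq_s3 _ _ _).trans (.trans ?_ (C'.C1.conj_heq_s3 _ _ _).symm)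
  rw [h0]

theorem agreeOn_Hfil (h : SameDecH G G') : ∀ k, G.F1.AgreeOn G'.F1 (C.Hfil k)
  | 0 => fun Φ hΦ => hΦ.elim (h.2.2 Φ) (agreeOn_isHId h.1 Φ)
  | k + 1 => agreeOn_horClos h.2.1 (G.F1.agreeOn_catClos h.2.1 (agreeOn_Hfil h k))

end DblFctr

theorem stmt3_general (C C' : DblCat.{u})
    (G G' : DblFctr C C') (h : SameDecH G G') (k : ℕ) :
    (∀ {f g : C.C1.Obj} (Φ : C.C1.Hom f g), C.Hfil k Φ → HEq (G.F1.map Φ) (G'.F1.map Φ)) ∧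
    (∀ {f g : C.C1.Obj} (Φ : C.C1.Hom f g), C.Vfil k Φ → HEq (G.F1.map Φ) (G'.F1.map Φ)) :=
  ⟨DblFctr.agreeOn_Hfil h k, G.F1.agreeOn_catClos h.2.1 (DblFctr.agreeOn_Hfil h k)⟩

/-- if two double functors `G, G'` between globularily generated double
categories have equal decorated horizontalizations, then for every positive integer
`k` their `k`-th horizontal functions agree (they agree on `H_k`) and their `k`-th
vertical functors agree (they agree on `V_k`; equality of the vertical functors also
includes equality of their object functions, i.e. of the actions on horizontal
morphisms, which is part of the hypothesis). -/
theorem stmt3 (C C' : DblCat.{u}) (hC : C.GloballyGenerated) (hC' : C'.GloballyGenerated)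
    (G G' : DblFctr C C') (h : SameDecH G G') (k : ℕ) :
    (∀ {f g : C.C1.Obj} (Φ : C.C1.Hom f g), C.Hfil k Φ → HEq (G.F1.map Φ) (G'.F1.map Φ)) ∧
    (∀ {f g : C.C1.Obj} (Φ : C.C1.Hom f g), C.Vfil k Φ → HEq (G.F1.map Φ) (G'.F1.map Φ)) :=
  stmt3_general C C' G G' h k
end
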